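/- arXiv:1805.11556 — 3 statements merged into one kernel-verified Lean document; each statement's English description precedes it below -/
import Mathlib

section
/- For n i.i.d. uniform random variables on [0,1], the probability that the first draw is strictly less than k and is not the maximum (the 'continuation' event) equals k - k^n/n. -/
/-!
Condition on the first draw `x`: the event needs `x < k`, and then fails only if the other
`n - 1` draws all lie below `x`, which has probability `x ^ (n - 1)`. Hence the probability is
`∫₀ᵏ (1 - x ^ (n - 1)) dx = k - k ^ n / n`.
-/

open MeasureTheory Set

theorem measure_pi_setOf_exists_lt {ι : Type*} [Fintype ι] (μ : Measure ℝ)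
    [IsProbabilityMeasure μ] (x : ℝ) :
    Measure.pi (fun _ : ι => μ) {y | ∃ i, x < y i} = 1 - μ (Iic x) ^ Fintype.card ι := by
  have hcompl : {y : ι → ℝ | ∃ i, x < y i} = (univ.pi fun _ => Iic x)ᶜ := by
    ext y; simp [Pi.le_def]
  rw [hcompl, prob_compl_eq_one_sub (.univ_pi fun _ => measurableSet_Iic), Measure.pi_pi,
    Finset.prod_const, Finset.card_univ]

theorem measure_pi_setOf_apply_zero_lt_and_exists_lt (m : ℕ) (μ : Measure ℝ) [SigmaFinite μ]
    (k : ℝ) :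
    Measure.pi (fun _ : Fin (m + 1) => μ) {a | a 0 < k ∧ ∃ i, a 0 < a i}
      = ∫⁻ x in Iio k, Measure.pi (fun _ : Fin m => μ) {y | ∃ j, x < y j} ∂μ := by
  set S : Set (ℝ × (Fin m → ℝ)) := {p | p.1 < k ∧ ∃ j, p.1 < p.2 j}
  have hS : MeasurableSet S := by
    refine measurableSet_setOfPred.2 (.and ?_ (.exists fun j => ?_)) <;> measurability
  have hpre : {a : Fin (m + 1) → ℝ | a 0 < k ∧ ∃ i, a 0 < a i}
      = MeasurableEquiv.piFinSuccAbove (fun _ => ℝ) 0 ⁻¹' S := by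
    ext a
    simp [S, Fin.exists_fin_succ, Fin.tail]
  have hslice : (fun x => Measure.pi (fun _ : Fin m => μ) (Prod.mk x ⁻¹' S))
      = (Iio k).indicator fun x => Measure.pi (fun _ : Fin m => μ) {y | ∃ j, x < y j} := by
    ext x
    by_cases hx : x < k <;> simp [S, hx]
  rw [hpre, (measurePreserving_piFinSuccAbove (fun _ => μ) 0).measure_preimage hS.nullMeasurableSet,
    Measure.prod_apply hS, ← lintegral_indicator measurableSet_Iio, hslice]

theorem volume_restrict_Icc_zero_one_Iic {x : ℝ} (hx : x ≤ 1) :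
    volume.restrict (Icc (0 : ℝ) 1) (Iic x) = ENNReal.ofReal x := by
  have hinter : Iic x ∩ Icc 0 1 = Icc 0 x := by
    ext y
    simp only [mem_inter_iff, mem_Iic, mem_Icc]
    exact ⟨fun ⟨hyx, hy0, _⟩ => ⟨hy0, hyx⟩, fun ⟨hy0, hyx⟩ => ⟨hyx, hy0, hyx.trans hx⟩⟩
  rw [Measure.restrict_apply measurableSet_Iic, hinter, Real.volume_Icc, sub_zero]

theorem setLIntegral_Ico_ofReal_one_sub_pow (m : ℕ) {k : ℝ} (hk0 : 0 ≤ k) (hk1 : k ≤ 1) :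
    ∫⁻ x in Ico 0 k, ENNReal.ofReal (1 - x ^ m) = ENNReal.ofReal (k - k ^ (m + 1) / (m + 1)) := by
  have hnonneg : 0 ≤ᵐ[volume.restrict (Ico 0 k)] fun x : ℝ => 1 - x ^ m :=
    ae_restrict_of_forall_mem measurableSet_Ico fun x hx =>
      sub_nonneg.2 (pow_le_one₀ hx.1 (hx.2.le.trans hk1))
  have hint : IntegrableOn (fun x : ℝ => 1 - x ^ m) (Ico 0 k) :=
    (by fun_prop : Continuous fun x : ℝ => 1 - x ^ m).integrableOn_Icc.mono_set
      Ico_subset_Icc_self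
  rw [← ofReal_integral_eq_lintegral_ofReal hint hnonneg, setIntegral_congr_set Ico_ae_eq_Ioc,
    ← intervalIntegral.integral_of_le hk0, intervalIntegral.integral_sub intervalIntegrable_const
      (intervalIntegral.intervalIntegrable_pow m)]
  simp [integral_pow]

/-- For `n` i.i.d. uniform random variables on `[0,1]`, the probability that the first draw
is strictly less than `k` and is not the maximum of the draws (the continuation event),
i.e. some other draw strictly exceeds it, equals `k - k^n/n`. -/
theorem continuation_round_one_prob (n : ℕ) (hn : 0 < n) (k : ℝ)
    (hk : k ∈ Set.Icc (0 : ℝ) 1) :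
    (Measure.pi fun _ : Fin n => (volume : Measure ℝ).restrict (Set.Icc 0 1))
      {a | a ⟨0, hn⟩ < k ∧ ∃ i, a ⟨0, hn⟩ < a i}
      = ENNReal.ofReal (k - k ^ n / n) := by
  obtain ⟨hk0, hk1⟩ := hk
  obtain ⟨m, rfl⟩ := Nat.exists_eq_add_one_of_ne_zero hn.ne'
  have : IsProbabilityMeasure (volume.restrict (Icc (0 : ℝ) 1)) := ⟨by simp⟩
  have hIco : Iio k ∩ Icc 0 1 = Ico 0 k := by
    ext x
    simp only [mem_inter_iff, mem_Iio, mem_Icc, mem_Ico]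
    exact ⟨fun ⟨hxk, hx0, _⟩ => ⟨hx0, hxk⟩, fun ⟨hx0, hxk⟩ => ⟨hxk, hx0, hxk.le.trans hk1⟩⟩
  calc _ = ∫⁻ x in Iio k, Measure.pi (fun _ : Fin m => volume.restrict (Icc (0 : ℝ) 1))
          {y | ∃ j, x < y j} ∂volume.restrict (Icc 0 1) :=
        measure_pi_setOf_apply_zero_lt_and_exists_lt m _ k
    _ = ∫⁻ x in Ico 0 k, ENNReal.ofReal (1 - x ^ m) := by
        rw [Measure.restrict_restrict measurableSet_Iio, hIco]
        refine setLIntegral_congr_fun measurableSet_Ico fun x hx => ?_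
        rw [measure_pi_setOf_exists_lt, volume_restrict_Icc_zero_one_Iic (hx.2.le.trans hk1),
          Fintype.card_fin, ENNReal.ofReal_sub _ (pow_nonneg hx.1 m), ENNReal.ofReal_one,
          ENNReal.ofReal_pow hx.1]
    _ = _ := by
        rw [setLIntegral_Ico_ofReal_one_sub_pow m hk0 hk1, Nat.cast_succ]
end

section
/- For three i.i.d. uniform random variables a_1, a_2, a_3 on [0,1] and nonincreasing decision numbers 1 ≥ k_1 ≥ k_2 ≥ 0, the probability of winning at round 2, i.e. P(a_1 < k_1, a_1 not maximum, a_2 ≥ k_2, a_2 = max(a_1,a_2,a_3)), equals k_1/2 - k_1^3/6 - k_2^3/3. -/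
/-!
Since the second draw `a 1` must be the largest, the event says `k₂ ≤ a 1`, `a 0 < min k₁ (a 1)`
and `a 2 ≤ a 1`. Conditioning on `a 1 = y`, the other two draws are independent and contribute
`min k₁ y * y`, so the probability is `∫_{k₂}^{1} min k₁ y * y dy`, which splits at `k₁` into
`(k₁³ - k₂³)/3 + k₁ (1 - k₁²)/2`.
-/

open MeasureTheory Set

theorem measurePreserving_fin_three_middle_first {α : Type*} [MeasurableSpace α]
    (μ : Measure α) [SigmaFinite μ] :
    MeasurePreserving (fun a : Fin 3 → α => (a 1, a 0, a 2))
      (Measure.pi fun _ => μ) (μ.prod (μ.prod μ)) := by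
  convert ((MeasurePreserving.id μ).prod (measurePreserving_finTwoArrow μ)).comp
    (measurePreserving_piFinSuccAbove (fun _ : Fin 3 => μ) 1) using 1
  rfl

theorem prod_prod_setOf_eq_setLIntegral {α β γ : Type*} [MeasurableSpace α]
    [MeasurableSpace β] [MeasurableSpace γ] (μ : Measure α) (ν : Measure β) (ρ : Measure γ)
    [SFinite ν] [SFinite ρ] {s : Set α} (hs : MeasurableSet s) (B : α → Set β) (C : α → Set γ)
    (hmeas : MeasurableSet {p : α × β × γ | p.1 ∈ s ∧ p.2.1 ∈ B p.1 ∧ p.2.2 ∈ C p.1}) :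
    μ.prod (ν.prod ρ) {p | p.1 ∈ s ∧ p.2.1 ∈ B p.1 ∧ p.2.2 ∈ C p.1}
      = ∫⁻ x in s, ν (B x) * ρ (C x) ∂μ := by
  rw [Measure.prod_apply hmeas, ← lintegral_indicator hs]
  congr 1 with x
  by_cases hx : x ∈ s
  · rw [indicator_of_mem hx, ← Measure.prod_prod]
    congr 1 with q
    simp [hx]
  · rw [indicator_of_notMem hx]
    simp [hx]

theorem restrict_Icc_zero_one_Iio {t : ℝ} (ht : t ≤ 1) :
    volume.restrict (Icc (0 : ℝ) 1) (Iio t) = ENNReal.ofReal t := by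
  rw [Measure.restrict_apply measurableSet_Iio,
    show Iio t ∩ Icc 0 1 = Ico 0 t by ext; simp; grind, Real.volume_Ico, sub_zero]

theorem restrict_Icc_zero_one_Iic {t : ℝ} (ht : t ≤ 1) :
    volume.restrict (Icc (0 : ℝ) 1) (Iic t) = ENNReal.ofReal t := by
  rw [Measure.restrict_apply measurableSet_Iic,
    show Iic t ∩ Icc 0 1 = Icc 0 t by ext; simp; grind, Real.volume_Icc, sub_zero]

theorem setLIntegral_Icc_ofReal {f : ℝ → ℝ} {a b : ℝ} (hab : a ≤ b)
    (hf : ContinuousOn f (Icc a b)) (hpos : ∀ y ∈ Icc a b, 0 ≤ f y) :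
    ∫⁻ y in Icc a b, ENNReal.ofReal (f y) = ENNReal.ofReal (∫ y in a..b, f y) := by
  rw [intervalIntegral.integral_of_le hab, ← integral_Icc_eq_integral_Ioc,
    ofReal_integral_eq_lintegral_ofReal hf.integrableOn_Icc
      ((ae_restrict_iff' measurableSet_Icc).2 (ae_of_all _ hpos))]

theorem integral_min_mul_self {a b c : ℝ} (hab : a ≤ b) (hbc : b ≤ c) :
    ∫ y in a..c, min b y * y = (b ^ 3 - a ^ 3) / 3 + b * (c ^ 2 - b ^ 2) / 2 := by
  have hint : ∀ u v, IntervalIntegrable (fun y => min b y * y) volume u v := fun u v =>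
    (by fun_prop : Continuous fun y => min b y * y).intervalIntegrable u v
  rw [← intervalIntegral.integral_add_adjacent_intervals (hint a b) (hint b c)]
  have hab' : ∫ y in a..b, min b y * y = ∫ y in a..b, y ^ 2 :=
    intervalIntegral.integral_congr fun y hy => by
      rw [uIcc_of_le hab] at hy
      simp [min_eq_right hy.2, sq]
  have hbc' : ∫ y in b..c, min b y * y = ∫ y in b..c, b * y :=
    intervalIntegral.integral_congr fun y hy => by
      rw [uIcc_of_le hbc] at hy
      simp [min_eq_left hy.1]
  rw [hab', hbc', integral_pow, intervalIntegral.integral_const_mul, integral_id]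
  ring

/-- For three i.i.d. uniform draws on `[0,1]` and nonincreasing decision numbers
`1 ≥ k₁ ≥ k₂ ≥ 0`, the probability of winning at round 2, i.e. `a₁ < k₁`,
`a₁ < max(a₂,a₃)`, `a₂ ≥ k₂` and `a₂ = max(a₁,a₂,a₃)`, equals
`k₁/2 - k₁³/6 - k₂³/3`. -/
theorem n_three_win_round_two (k₁ k₂ : ℝ) (h0 : 0 ≤ k₂) (h21 : k₂ ≤ k₁) (h1 : k₁ ≤ 1) :
    (Measure.pi fun _ : Fin 3 => (volume : Measure ℝ).restrict (Set.Icc 0 1))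
      {a | a 0 < k₁ ∧ a 0 < max (a 1) (a 2) ∧ k₂ ≤ a 1 ∧ ∀ i, a i ≤ a 1}
      = ENNReal.ofReal (k₁ / 2 - k₁ ^ 3 / 6 - k₂ ^ 3 / 3) := by
  set μ : Measure ℝ := volume.restrict (Icc 0 1)
  set S : Set (ℝ × ℝ × ℝ) := {p | p.1 ∈ Ici k₂ ∧ p.2.1 ∈ Iio (min k₁ p.1) ∧ p.2.2 ∈ Iic p.1}
  have hS : MeasurableSet S := by
    simp only [S, mem_Ici, mem_Iio, mem_Iic]
    measurability
  have hevent : {a : Fin 3 → ℝ | a 0 < k₁ ∧ a 0 < max (a 1) (a 2) ∧ k₂ ≤ a 1 ∧ ∀ i, a i ≤ a 1}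
      = (fun a => (a 1, a 0, a 2)) ⁻¹' S := by
    ext a
    simp only [S, mem_ofPred_eq, mem_preimage, mem_Ici, mem_Iio, mem_Iic, Fin.forall_fin_succ,
      lt_min_iff]
    grind
  have hconditioned : ∫⁻ y in Icc k₂ 1, μ (Iio (min k₁ y)) * μ (Iic y)
      = ∫⁻ y in Icc k₂ 1, ENNReal.ofReal (min k₁ y * y) :=
    setLIntegral_congr_fun measurableSet_Icc fun y hy => by
      rw [restrict_Icc_zero_one_Iio (min_le_of_right_le hy.2), restrict_Icc_zero_one_Iic hy.2,
        ENNReal.ofReal_mul (le_min (h0.trans h21) (h0.trans hy.1))]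
  rw [hevent, (measurePreserving_fin_three_middle_first μ).measure_preimage hS.nullMeasurableSet,
    (prod_prod_setOf_eq_setLIntegral μ μ μ measurableSet_Ici (fun y => Iio (min k₁ y)) Iic hS :
      μ.prod (μ.prod μ) S = _),
    Measure.restrict_restrict measurableSet_Ici,
    show Ici k₂ ∩ Icc 0 1 = Icc k₂ 1 by ext; simp; grind, hconditioned,
    setLIntegral_Icc_ofReal (h21.trans h1) (by fun_prop)
      fun y hy => mul_nonneg (le_min (h0.trans h21) (h0.trans hy.1)) (h0.trans hy.1),
    integral_min_mul_self h21 h1]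
  congr 1
  ring
end

section
/- For the identical-decision-number strategy with parameter k on n draws, the overall win probability equals k^n · ( Σ_{r=1}^{n} 1/((n-r+1)·k^{n-r+1}) - H_{n-1} ), where H_{n-1} = Σ_{j=1}^{n-1} 1/j is the (n-1)-st harmonic number (equivalently ψ(n) + γ). -/
/-!
Split the event according to the round `r` at which the player stops on the maximum. Conditioning
on the value `x = a_r`, the other draws are independent: the `r` earlier ones must lie below
`min k x` and the later ones below `x`, so the round contributes
`∫ min(k, x)^r x^(n-1-r) dx` over those `x ∈ [0, 1]` that pass the threshold (all of them at the
last round). The part over `[k, 1]` is `k^r (1 - k^(n-r)) / (n - r)` for every `r`; summed over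
`r`, the terms `-k^n / (n - r)` give `-k^n H_n`, and the extra `∫_0^k x^(n-1) dx = k^n / n` of the
last round turns this into `-k^n H_{n-1}`.
-/

open MeasureTheory Set

local notation "μ₀" => Measure.restrict (volume : Measure ℝ) (Icc 0 1)

def stopsOnMaxAt {n : ℕ} (k : ℝ) (r : Fin n) : Set (Fin n → ℝ) :=
  {a | (∀ j, j < r → a j < k ∧ ∃ i, a j < a i) ∧ ((r : ℕ) < n - 1 → k ≤ a r) ∧ ∀ i, a i ≤ a r}

lemma measurableSet_stopsOnMaxAt {n : ℕ} (k : ℝ) (r : Fin n) :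
    MeasurableSet (stopsOnMaxAt k r) := by
  unfold stopsOnMaxAt
  measurability

lemma pairwise_disjoint_stopsOnMaxAt {n : ℕ} (k : ℝ) :
    Pairwise fun r s : Fin n => Disjoint (stopsOnMaxAt k r) (stopsOnMaxAt k s) := by
  refine pairwise_disjoint_on _ |>.mpr fun r s hrs => Set.disjoint_left.mpr ?_
  rintro a ⟨-, -, hmax⟩ ⟨hbelow, -, -⟩
  obtain ⟨-, i, hi⟩ := hbelow r hrs
  exact (hmax i).not_gt hi

lemma mem_stopsOnMaxAt_iff {n : ℕ} {k : ℝ} {r : Fin n} {a : Fin n → ℝ} :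
    a ∈ stopsOnMaxAt k r ↔
      ((r : ℕ) < n - 1 → k ≤ a r) ∧ ∀ j, a j ∈ if j < r then Iio (min k (a r)) else Iic (a r) := by
  constructor
  · rintro ⟨hbelow, hthreshold, hmax⟩
    refine ⟨hthreshold, fun j => ?_⟩
    split_ifs with hj
    · obtain ⟨hk, i, hi⟩ := hbelow j hj
      exact lt_min hk (hi.trans_le (hmax i))
    · exact hmax j
  · rintro ⟨hthreshold, hmem⟩
    have hbelow : ∀ j, j < r → a j < min k (a r) := fun j hj => by
      simpa [hj] using hmem j
    refine ⟨fun j hj => ⟨(hbelow j hj).trans_le (min_le_left _ _), r,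
      (hbelow j hj).trans_le (min_le_right _ _)⟩, hthreshold, fun j => ?_⟩
    by_cases hj : j < r
    · exact (hbelow j hj).le.trans (min_le_right _ _)
    · simpa [hj] using hmem j

lemma insertNth_mem_stopsOnMaxAt_iff {m : ℕ} (k x : ℝ) (r : Fin (m + 1)) (g : Fin m → ℝ) :
    Fin.insertNth r x g ∈ stopsOnMaxAt k r ↔
      ((r : ℕ) < m → k ≤ x) ∧
        g ∈ univ.pi fun j : Fin m => if (j : ℕ) < r then Iio (min k x) else Iic x := by
  simp only [mem_stopsOnMaxAt_iff, r.forall_iff_succAbove, Fin.insertNth_apply_same,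
    Fin.insertNth_apply_succAbove, lt_irrefl, if_false, mem_Iic, le_refl, true_and,
    Fin.succAbove_lt_iff_castSucc_lt, Nat.add_sub_cancel, mem_univ_pi]
  simp only [Fin.lt_def, Fin.val_castSucc]

lemma restrict_Icc_zero_one_Iic_s11 {c : ℝ} (h1 : c ≤ 1) : μ₀ (Iic c) = ENNReal.ofReal c := by
  have : Iic c ∩ Icc 0 1 = Icc 0 c := by
    ext x
    simp only [mem_inter_iff, mem_Iic, mem_Icc]
    exact ⟨fun h => ⟨h.2.1, h.1⟩, fun h => ⟨h.2, h.1, h.2.trans h1⟩⟩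
  rw [Measure.restrict_apply measurableSet_Iic, this, Real.volume_Icc, sub_zero]

lemma restrict_Icc_zero_one_Iio_s11 {c : ℝ} (h1 : c ≤ 1) : μ₀ (Iio c) = ENNReal.ofReal c := by
  rw [measure_congr Iio_ae_eq_Iic, restrict_Icc_zero_one_Iic_s11 h1]

lemma Fin.prod_ite_val_lt {M : Type*} [CommMonoid M] {m r : ℕ} (hr : r ≤ m) (a b : M) :
    ∏ j : Fin m, (if (j : ℕ) < r then a else b) = a ^ r * b ^ (m - r) := by
  have hlt : (Finset.range m).filter (· < r) = Finset.range r := by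
    ext
    simp only [Finset.mem_filter, Finset.mem_range]
    omega
  have hge : (Finset.range m).filter (¬ · < r) = Finset.Ico r m := by
    ext
    simp only [Finset.mem_filter, Finset.mem_range, Finset.mem_Ico]
    omega
  rw [Fin.prod_univ_eq_prod_range (fun i => if i < r then a else b), Finset.prod_ite,
    Finset.prod_const, Finset.prod_const, hlt, hge, Finset.card_range, Nat.card_Ico]

lemma pi_restrict_Icc_zero_one_box {m r : ℕ} (hr : r ≤ m) {c x : ℝ} (hc0 : 0 ≤ c) (hc1 : c ≤ 1)
    (hx0 : 0 ≤ x) (hx1 : x ≤ 1) :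
    Measure.pi (fun _ : Fin m => μ₀) (univ.pi fun j => if (j : ℕ) < r then Iio c else Iic x)
      = ENNReal.ofReal (c ^ r * x ^ (m - r)) := by
  have hfactor : ∀ j : Fin m, μ₀ (if (j : ℕ) < r then Iio c else Iic x)
      = if (j : ℕ) < r then ENNReal.ofReal c else ENNReal.ofReal x := fun j => by
    split_ifs
    exacts [restrict_Icc_zero_one_Iio_s11 hc1, restrict_Icc_zero_one_Iic_s11 hx1]
  rw [Measure.pi_pi, Finset.prod_congr rfl fun j _ => hfactor j, Fin.prod_ite_val_lt hr,
    ENNReal.ofReal_mul (pow_nonneg hc0 _), ENNReal.ofReal_pow hc0, ENNReal.ofReal_pow hx0]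

noncomputable def stopOnMaxDensity (m : ℕ) (k : ℝ) (r : ℕ) (x : ℝ) : ENNReal :=
  {x | r < m → k ≤ x}.indicator (fun x => ENNReal.ofReal (min k x ^ r * x ^ (m - r))) x

lemma pi_restrict_Icc_zero_one_stopsOnMaxAt {m : ℕ} {k : ℝ} (hk0 : 0 ≤ k) (hk1 : k ≤ 1)
    (r : Fin (m + 1)) :
    Measure.pi (fun _ => μ₀) (stopsOnMaxAt k r) = ∫⁻ x in Icc 0 1, stopOnMaxDensity m k r x := by
  let e := MeasurableEquiv.piFinSuccAbove (fun _ : Fin (m + 1) => ℝ) r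
  have hslice : ∀ x ∈ Icc (0 : ℝ) 1,
      Measure.pi (fun _ : Fin m => μ₀) (Prod.mk x ⁻¹' (e.symm ⁻¹' stopsOnMaxAt k r))
        = stopOnMaxDensity m k r x := by
    intro x hx
    have : Prod.mk x ⁻¹' (e.symm ⁻¹' stopsOnMaxAt k r) = {g | ((r : ℕ) < m → k ≤ x) ∧
        g ∈ univ.pi fun j : Fin m => if (j : ℕ) < r then Iio (min k x) else Iic x} := by
      ext g
      exact insertNth_mem_stopsOnMaxAt_iff k x r g
    rw [this, stopOnMaxDensity]
    by_cases hthreshold : x ∈ {x : ℝ | (r : ℕ) < m → k ≤ x}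
    · rw [indicator_of_mem hthreshold, ← pi_restrict_Icc_zero_one_box (by omega) (le_min hk0 hx.1)
        ((min_le_left _ _).trans hk1) hx.1 hx.2]
      congr 1
      ext g
      exact and_iff_right hthreshold
    · rw [indicator_of_notMem hthreshold]
      exact measure_mono_null (fun g hg => absurd hg.1 hthreshold) measure_empty
  rw [← ((measurePreserving_piFinSuccAbove (fun _ => μ₀) r).symm e).measure_preimage_equiv,
    Measure.prod_apply (e.symm.measurable (measurableSet_stopsOnMaxAt k r)),
    setLIntegral_congr_fun measurableSet_Icc hslice]

lemma lintegral_Icc_ofReal_eq_intervalIntegral {f : ℝ → ℝ} {a b : ℝ} (hab : a ≤ b)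
    (hf : ContinuousOn f (Icc a b)) (hf0 : ∀ x ∈ Icc a b, 0 ≤ f x) :
    ∫⁻ x in Icc a b, ENNReal.ofReal (f x) = ENNReal.ofReal (∫ x in a..b, f x) := by
  rw [← ofReal_integral_eq_lintegral_ofReal hf.integrableOn_Icc
    (ae_restrict_of_forall_mem measurableSet_Icc hf0), integral_Icc_eq_integral_Ioc,
    intervalIntegral.integral_of_le hab]

/-- `∫_k^1 k^r x^(m-r) dx`, plus `∫_0^k x^m dx` at the last round `r = m`, whose draw is
accepted even below the threshold. -/
noncomputable def stopOnMaxProb (m : ℕ) (k : ℝ) (r : ℕ) : ℝ :=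
  k ^ r * (1 - k ^ (m + 1 - r)) / (m + 1 - r : ℕ) + if r = m then k ^ (m + 1) / (m + 1) else 0

lemma stopOnMaxProb_nonneg (m : ℕ) {k : ℝ} (hk0 : 0 ≤ k) (hk1 : k ≤ 1) (r : ℕ) :
    0 ≤ stopOnMaxProb m k r := by
  have : 0 ≤ 1 - k ^ (m + 1 - r) := sub_nonneg.mpr (pow_le_one₀ hk0 hk1)
  unfold stopOnMaxProb
  split_ifs <;> positivity

lemma lintegral_stopOnMaxDensity {m r : ℕ} (hr : r ≤ m) {k : ℝ} (hk0 : 0 ≤ k) (hk1 : k ≤ 1) :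
    ∫⁻ x in Icc 0 1, stopOnMaxDensity m k r x = ENNReal.ofReal (stopOnMaxProb m k r) := by
  unfold stopOnMaxDensity
  rcases hr.lt_or_eq with hr | rfl
  · have hset : {x : ℝ | r < m → k ≤ x} = Ici k := by ext; simp [hr]
    have hIcc : Ici k ∩ Icc (0 : ℝ) 1 = Icc k 1 := by
      ext x
      simp only [mem_inter_iff, mem_Ici, mem_Icc]
      exact ⟨fun h => ⟨h.1, h.2.2⟩, fun h => ⟨h.1, hk0.trans h.1, h.2⟩⟩
    have hmin : ∀ x ∈ Icc k 1, ENNReal.ofReal (min k x ^ r * x ^ (m - r))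
        = ENNReal.ofReal (k ^ r * x ^ (m - r)) := fun x hx => by rw [min_eq_left hx.1]
    rw [hset, lintegral_indicator measurableSet_Ici, Measure.restrict_restrict measurableSet_Ici,
      hIcc, setLIntegral_congr_fun measurableSet_Icc hmin,
      lintegral_Icc_ofReal_eq_intervalIntegral hk1 (by fun_prop)
        fun x hx => by have := hk0.trans hx.1; positivity,
      intervalIntegral.integral_const_mul, integral_pow, stopOnMaxProb, if_neg hr.ne]
    congr 1
    rw [show m + 1 - r = m - r + 1 by omega]
    push_cast
    ring
  · have hcont : Continuous fun x : ℝ => min k x ^ r * x ^ (r - r) := by fun_prop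
    rw [show {x : ℝ | r < r → k ≤ x} = univ by ext; simp, indicator_univ,
      lintegral_Icc_ofReal_eq_intervalIntegral zero_le_one hcont.continuousOn
        fun x hx => by have := hx.1; positivity,
      ← intervalIntegral.integral_add_adjacent_intervals (b := k)
        (hcont.intervalIntegrable _ _) (hcont.intervalIntegrable _ _)]
    have hlow : ∫ x in (0 : ℝ)..k, min k x ^ r * x ^ (r - r) = ∫ x in (0 : ℝ)..k, x ^ r :=
      intervalIntegral.integral_congr fun x hx => by
        rw [uIcc_of_le hk0] at hx
        simp [min_eq_right hx.2]
    have hhigh : ∫ x in k..1, min k x ^ r * x ^ (r - r) = ∫ x in k..1, k ^ r :=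
      intervalIntegral.integral_congr fun x hx => by
        rw [uIcc_of_le hk1] at hx
        simp [min_eq_left hx.1]
    rw [hlow, hhigh, integral_pow, intervalIntegral.integral_const, stopOnMaxProb, if_pos rfl]
    congr 1
    simp only [zero_pow (Nat.succ_ne_zero r), sub_zero, smul_eq_mul, Nat.add_sub_cancel_left,
      pow_one, Nat.cast_one, div_one]
    ring

lemma sum_Icc_one_eq_sum_range {M : Type*} [AddCommMonoid M] (f : ℕ → M) (n : ℕ) :
    ∑ i ∈ Finset.Icc 1 n, f i = ∑ i ∈ Finset.range n, f (i + 1) := by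
  rw [Finset.range_eq_Ico, Finset.sum_Ico_add' f 0 n 1, zero_add, Finset.Ico_add_one_right_eq_Icc]

lemma sum_range_one_div_sub (n : ℕ) :
    ∑ r ∈ Finset.range n, 1 / ((n - r : ℕ) : ℝ) = ∑ j ∈ Finset.Icc 1 n, (1 : ℝ) / j := by
  rw [← Finset.sum_range_reflect, sum_Icc_one_eq_sum_range]
  refine Finset.sum_congr rfl fun r hr => ?_
  rw [Finset.mem_range] at hr
  congr 2
  omega

lemma pow_mul_sum_Icc_one_div (m : ℕ) {k : ℝ} (hk : k ≠ 0) :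
    k ^ (m + 1) * ∑ r ∈ Finset.Icc 1 (m + 1), 1 / (((m + 1 - r + 1 : ℕ) : ℝ) * k ^ (m + 1 - r + 1))
      = ∑ r ∈ Finset.range (m + 1), k ^ r / (m + 1 - r : ℕ) := by
  rw [Finset.mul_sum, sum_Icc_one_eq_sum_range]
  refine Finset.sum_congr rfl fun r hr => ?_
  rw [Finset.mem_range] at hr
  rw [show m + 1 - (r + 1) + 1 = m + 1 - r by omega, ← pow_mul_pow_sub k hr.le]
  field_simp

lemma sum_stopOnMaxProb (m : ℕ) {k : ℝ} (hk : k ≠ 0) :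
    ∑ r ∈ Finset.range (m + 1), stopOnMaxProb m k r
      = k ^ (m + 1) *
          (∑ r ∈ Finset.Icc 1 (m + 1), 1 / (((m + 1 - r + 1 : ℕ) : ℝ) * k ^ (m + 1 - r + 1))
            - ∑ j ∈ Finset.Icc 1 m, (1 : ℝ) / j) := by
  have hterm : ∀ r ∈ Finset.range (m + 1), k ^ r * (1 - k ^ (m + 1 - r)) / (m + 1 - r : ℕ)
      = k ^ r / (m + 1 - r : ℕ) - k ^ (m + 1) * (1 / (m + 1 - r : ℕ)) := fun r hr => by
    rw [← pow_mul_pow_sub k (Finset.mem_range.mp hr).le]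
    ring
  have hharmonic : ∑ r ∈ Finset.range (m + 1), 1 / ((m + 1 - r : ℕ) : ℝ)
      = ∑ j ∈ Finset.Icc 1 m, (1 : ℝ) / j + 1 / (m + 1) := by
    rw [sum_range_one_div_sub, Finset.sum_Icc_succ_top (by omega)]
    push_cast
    rfl
  rw [mul_sub, pow_mul_sum_Icc_one_div m hk]
  simp only [stopOnMaxProb, Finset.sum_add_distrib, Finset.sum_congr rfl hterm,
    Finset.sum_sub_distrib, ← Finset.mul_sum, hharmonic, Finset.sum_ite_eq', Finset.mem_range,
    Nat.lt_succ_self, if_true]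
  ring

theorem identical_k_overall_win_prob_general (n : ℕ) (k : ℝ) (hk0 : 0 < k)
    (hk1 : k ≤ 1) :
    (Measure.pi fun _ : Fin n => (volume : Measure ℝ).restrict (Set.Icc 0 1))
      {a | ∃ r : Fin n, (∀ j : Fin n, j < r → a j < k ∧ ∃ i, a j < a i) ∧
        ((r : ℕ) < n - 1 → k ≤ a r) ∧ ∀ i, a i ≤ a r}
      = ENNReal.ofReal (k ^ n *
          ((∑ r ∈ Finset.Icc 1 n, 1 / (((n - r + 1 : ℕ) : ℝ) * k ^ (n - r + 1)))
            - ∑ j ∈ Finset.Icc 1 (n - 1), (1 : ℝ) / j)) := by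
  rcases n with _ | m
  · simp
  rw [Set.ofPred_exists]
  change Measure.pi _ (⋃ r, stopsOnMaxAt k r) = _
  rw [measure_iUnion (pairwise_disjoint_stopsOnMaxAt k) (measurableSet_stopsOnMaxAt k),
    tsum_fintype, Nat.add_sub_cancel, ← sum_stopOnMaxProb m hk0.ne',
    ← Fin.sum_univ_eq_sum_range (stopOnMaxProb m k),
    ENNReal.ofReal_sum_of_nonneg fun (r : Fin (m + 1)) _ => stopOnMaxProb_nonneg m hk0.le hk1 r]
  refine Finset.sum_congr rfl fun r _ => ?_
  rw [pi_restrict_Icc_zero_one_stopsOnMaxAt hk0.le hk1,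
    lintegral_stopOnMaxDensity (Nat.lt_succ_iff.mp r.2) hk0.le hk1]

/-- For the identical-decision-number strategy with parameter `k ∈ (0,1]` on `n` draws
(accept `a_r` iff `a_r ≥ k` for `r < n`, always accept at round `n`), the overall win
probability (the probability that at some round the player stops on the maximum of the
sample, having continued past all earlier rounds) equals
`k^n · ( Σ_{r=1}^{n} 1/((n-r+1)·k^(n-r+1)) - H_{n-1} )` where `H_{n-1} = Σ_{j=1}^{n-1} 1/j`. -/
theorem identical_k_overall_win_prob (n : ℕ) (hn : 2 ≤ n) (k : ℝ) (hk0 : 0 < k)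
    (hk1 : k ≤ 1) :
    (Measure.pi fun _ : Fin n => (volume : Measure ℝ).restrict (Set.Icc 0 1))
      {a | ∃ r : Fin n, (∀ j : Fin n, j < r → a j < k ∧ ∃ i, a j < a i) ∧
        ((r : ℕ) < n - 1 → k ≤ a r) ∧ ∀ i, a i ≤ a r}
      = ENNReal.ofReal (k ^ n *
          ((∑ r ∈ Finset.Icc 1 n, 1 / (((n - r + 1 : ℕ) : ℝ) * k ^ (n - r + 1)))
            - ∑ j ∈ Finset.Icc 1 (n - 1), (1 : ℝ) / j)) :=
  identical_k_overall_win_prob_general n k hk0 hk1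
end
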